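/- arXiv:2306.05009 — 2 statements merged into one kernel-verified Lean document; each statement's English description precedes it below -/
import Mathlib

section
/- For every x ∈ ℝ, the principal value (1/π)·PV∫ u'(y)/(x−y) dy with u(y) = (1+y²)^{−1/2} exists and equals (2·(x²+1)^{1/2} − 2x·arsinh(x))/(π·(x²+1)^{3/2}); that is, the half Laplacian of (1+x²)^{−1/2} equals (2√(x²+1) − 2x·arsinh(x))/(π(x²+1)^{3/2}). -/
open Filter MeasureTheory Set Topology

noncomputable def Fa (x y : ℝ) : ℝ :=
  y / Real.sqrt (1+y^2) - x/(1+x^2) * ((x*y-1)/Real.sqrt (1+y^2))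
    - x/((1+x^2)*Real.sqrt (1+x^2)) *
      Real.log ((1 + x*y + Real.sqrt (1+x^2) * Real.sqrt (1+y^2)) / |x - y|)

lemma N_pos (x y : ℝ) : 0 < 1 + x*y + Real.sqrt (1+x^2) * Real.sqrt (1+y^2) := by
  have h1 : Real.sqrt (1+x^2) * Real.sqrt (1+y^2) = Real.sqrt ((1+x^2)*(1+y^2)) :=
    (Real.sqrt_mul (by positivity) _).symm
  have h2 : (0:ℝ) ≤ Real.sqrt ((1+x^2)*(1+y^2)) := Real.sqrt_nonneg _
  have h3 : (Real.sqrt ((1+x^2)*(1+y^2)))^2 = (1+x^2)*(1+y^2) :=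
    Real.sq_sqrt (by positivity)
  rw [h1]
  nlinarith [sq_nonneg (x - y), sq_nonneg (1 + x*y + Real.sqrt ((1+x^2)*(1+y^2))), sq_nonneg (x+y)]

lemma hasDerivAt_Fa (x y : ℝ) (h : y ≠ x) :
    HasDerivAt (Fa x) ((-y / ((1+y^2) * Real.sqrt (1+y^2))) / (x - y)) y := by
  have hxy : x - y ≠ 0 := sub_ne_zero.mpr (Ne.symm h)
  have hsp : (0:ℝ) < 1 + y^2 := by positivity
  have hqp : (0:ℝ) < 1 + x^2 := by positivity
  set s := Real.sqrt (1+y^2) with hs_def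
  set q := Real.sqrt (1+x^2) with hq_def
  have hs : 0 < s := Real.sqrt_pos.mpr hsp
  have hq : 0 < q := Real.sqrt_pos.mpr hqp
  have hs2 : s^2 = 1+y^2 := Real.sq_sqrt hsp.le
  have hq2 : q^2 = 1+x^2 := Real.sq_sqrt hqp.le
  have hN : 0 < 1 + x*y + q*s := N_pos x y
  -- derivative of s
  have hds : HasDerivAt (fun y : ℝ => Real.sqrt (1+y^2)) (y / s) y := by
    have h1 : HasDerivAt (fun y : ℝ => 1 + y ^ 2) (2*y) y := by
      simpa using ((hasDerivAt_pow 2 y).const_add 1)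
    have := (Real.hasDerivAt_sqrt hsp.ne').comp y h1
    refine this.congr_deriv ?_
    rw [← hs_def]; field_simp
  -- term 1 : y / s
  have ht1 : HasDerivAt (fun y : ℝ => y / Real.sqrt (1+y^2))
      (1/((1+y^2)*s)) y := by
    have := (hasDerivAt_id y).div hds hs.ne'
    refine this.congr_deriv ?_
    rw [← hs_def, ← hs2]; field_simp; simp only [id_eq]; linear_combination (1:ℝ) * hs2
  -- term 2 : (x*y-1)/s
  have ht2 : HasDerivAt (fun y : ℝ => (x*y-1) / Real.sqrt (1+y^2))
      ((x+y)/((1+y^2)*s)) y := by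
    have hnum : HasDerivAt (fun y : ℝ => x*y-1) x y := by
      simpa using ((hasDerivAt_id y).const_mul x).sub_const 1
    have := hnum.div hds hs.ne'
    refine this.congr_deriv ?_
    rw [← hs_def, ← hs2]; field_simp; linear_combination x * hs2
  -- log N
  have hdN : HasDerivAt (fun y : ℝ => 1 + x*y + q * Real.sqrt (1+y^2))
      (x + q*(y/s)) y := by
    have hlin : HasDerivAt (fun y : ℝ => 1 + x*y) x y := by
      simpa using ((hasDerivAt_id y).const_mul x).const_add 1
    exact hlin.add (hds.const_mul q)
  have hlogN : HasDerivAt (fun y : ℝ => Real.log (1 + x*y + q * Real.sqrt (1+y^2)))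
      ((x + q*(y/s))/(1 + x*y + q*s)) y := by
    have := hdN.log hN.ne'
    simpa using this
  have hlogxy : HasDerivAt (fun y : ℝ => Real.log (x - y)) (-(x-y)⁻¹) y := by
    have hsub : HasDerivAt (fun y : ℝ => x - y) (-1) y := by
      simpa using (hasDerivAt_id y).const_sub x
    have := hsub.log hxy
    convert this using 1; field_simp
  -- assembled alternative function
  have hF' : HasDerivAt (fun y : ℝ => y / Real.sqrt (1+y^2)
      - x/(1+x^2) * ((x*y-1)/Real.sqrt (1+y^2))
      - x/((1+x^2)*q) * (Real.log (1 + x*y + q * Real.sqrt (1+y^2)) - Real.log (x - y)))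
      (1/((1+y^2)*s) - x/(1+x^2) * ((x+y)/((1+y^2)*s))
        - x/((1+x^2)*q) * ((x + q*(y/s))/(1 + x*y + q*s) - -(x-y)⁻¹)) y :=
    (ht1.sub ((ht2.const_mul _))).sub ((hlogN.sub hlogxy).const_mul _)
  -- key algebraic identity for the log derivative
  have key : (x + q*(y/s))/(1 + x*y + q*s) - -(x-y)⁻¹ = q/(s*(x-y)) := by
    rw [sub_neg_eq_add]
    field_simp
    linear_combination q * hs2 - s * hq2
  rw [key] at hF'
  -- final simplification of the derivative value
  have hval : 1/((1+y^2)*s) - x/(1+x^2) * ((x+y)/((1+y^2)*s))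
      - x/((1+x^2)*q) * (q/(s*(x-y)))
      = (-y / ((1+y^2) * s)) / (x - y) := by
    field_simp
    ring
  rw [hval] at hF'
  -- now transfer from the alternative expression of Fa to Fa itself
  refine hF'.congr_of_eventuallyEq ?_
  have hopen : IsOpen {z : ℝ | z ≠ x} := isOpen_ne
  filter_upwards [hopen.mem_nhds h] with z hz
  have hxz : x - z ≠ 0 := sub_ne_zero.mpr (Ne.symm hz)
  have hNz : (0:ℝ) < 1 + x*z + q * Real.sqrt (1+z^2) := N_pos x z
  unfold Fa
  rw [← hq_def, Real.log_div hNz.ne' (abs_ne_zero.mpr hxz), Real.log_abs]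

lemma xq_pos (x : ℝ) : 0 < x + Real.sqrt (1+x^2) := by
  nlinarith [Real.sq_sqrt (show (0:ℝ) ≤ 1+x^2 by positivity), Real.sqrt_nonneg (1+x^2),
    abs_nonneg x, sq_abs x, neg_abs_le x]

lemma qx_pos (x : ℝ) : 0 < Real.sqrt (1+x^2) - x := by
  nlinarith [Real.sq_sqrt (show (0:ℝ) ≤ 1+x^2 by positivity), Real.sqrt_nonneg (1+x^2)]

lemma log_qx (x : ℝ) : Real.log (Real.sqrt (1+x^2) - x) = - Real.arsinh x := by
  have h : (Real.sqrt (1+x^2) - x) * (x + Real.sqrt (1+x^2)) = 1 := by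
    nlinarith [Real.sq_sqrt (show (0:ℝ) ≤ 1+x^2 by positivity)]
  have := Real.log_mul (qx_pos x).ne' (xq_pos x).ne'
  rw [h, Real.log_one] at this
  rw [Real.arsinh]
  linarith [this]

lemma sqrt_inv_sq (y : ℝ) (hy : 0 < y) : Real.sqrt (1+(y⁻¹)^2) = Real.sqrt (1+y^2) / y := by
  have h : 1+(y⁻¹)^2 = (1+y^2)/y^2 := by field_simp; ring
  rw [h, Real.sqrt_div (by positivity), Real.sqrt_sq hy.le]

lemma tendsto_Fa_atTop (x : ℝ) : Tendsto (Fa x) atTop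
    (𝓝 (1/(1+x^2) - x*Real.arsinh x/((1+x^2)*Real.sqrt (1+x^2)))) := by
  set q := Real.sqrt (1+x^2) with hq_def
  have hqp : (0:ℝ) < 1+x^2 := by positivity
  have hq : 0 < q := Real.sqrt_pos.mpr hqp
  set G : ℝ → ℝ := fun t => 1/Real.sqrt (1+t^2) - x/(1+x^2) * ((x*1-t)/Real.sqrt (1+t^2))
    - x/((1+x^2)*q) * Real.log ((t+x+q*Real.sqrt (1+t^2))/(1-x*t)) with hG_def
  have hG0 : G 0 = 1/(1+x^2) - x*Real.arsinh x/((1+x^2)*q) := by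
    have h0 : Real.sqrt (1+(0:ℝ)^2) = 1 := by norm_num
    rw [hG_def]; simp only [h0]
    rw [show ((0:ℝ)+x+q*1)/(1-x*0) = x + q by ring_nf, Real.arsinh]
    rw [← hq_def]
    field_simp
    ring
  have hGc : ContinuousAt G 0 := by
    have hs : ContinuousAt (fun t : ℝ => Real.sqrt (1+t^2)) 0 :=
      (Real.continuous_sqrt.comp (by continuity)).continuousAt
    have hs0 : Real.sqrt (1+(0:ℝ)^2) ≠ 0 := by norm_num
    have harg : ContinuousAt (fun t : ℝ => (t+x+q*Real.sqrt (1+t^2))/(1-x*t)) 0 := by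
      apply ContinuousAt.div
      · exact (continuousAt_id.add continuousAt_const).add (continuousAt_const.mul hs)
      · exact continuousAt_const.sub (continuousAt_const.mul continuousAt_id)
      · norm_num
    have harg0 : ((0:ℝ)+x+q*Real.sqrt (1+(0:ℝ)^2))/(1-x*0) ≠ 0 := by
      have h1 : ((0:ℝ)+x+q*Real.sqrt (1+(0:ℝ)^2))/(1-x*0) = x + q := by
        norm_num
      rw [h1]; exact (xq_pos x).ne'
    refine (ContinuousAt.sub (ContinuousAt.sub ?_ ?_) ?_)
    · exact ContinuousAt.div continuousAt_const hs hs0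
    · exact continuousAt_const.mul (ContinuousAt.div
        (continuousAt_const.sub continuousAt_id) hs hs0)
    · exact continuousAt_const.mul (ContinuousAt.log harg (by simpa using harg0))
  have hcomp : Tendsto (fun y : ℝ => G y⁻¹) atTop (𝓝 (G 0)) :=
    (hGc.tendsto).comp tendsto_inv_atTop_zero
  rw [hG0] at hcomp
  refine hcomp.congr' ?_
  filter_upwards [eventually_gt_atTop (0:ℝ), eventually_gt_atTop x] with y hy0 hyx
  have hsq : Real.sqrt (1+(y⁻¹)^2) = Real.sqrt (1+y^2) / y := sqrt_inv_sq y hy0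
  have hsp : (0:ℝ) < Real.sqrt (1+y^2) := Real.sqrt_pos.mpr (by positivity)
  rw [hG_def]
  simp only [hsq]
  unfold Fa
  rw [← hq_def]
  have habs : |x - y| = y - x := by rw [abs_sub_comm]; exact abs_of_pos (by linarith)
  have e1 : 1/(Real.sqrt (1+y^2)/y) = y / Real.sqrt (1+y^2) := by
    rw [one_div_div]
  have e2 : (x*1-y⁻¹)/(Real.sqrt (1+y^2)/y) = (x*y-1)/Real.sqrt (1+y^2) := by
    rw [div_div_eq_mul_div, div_eq_div_iff (by positivity) hsp.ne']
    field_simp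
  have e3 : (y⁻¹+x+q*(Real.sqrt (1+y^2)/y))/(1-x*y⁻¹)
      = (1 + x*y + q * Real.sqrt (1+y^2))/|x - y| := by
    rw [habs]
    have hd : (0:ℝ) < 1 - x*y⁻¹ := by
      have : x * y⁻¹ < 1 := by
        rw [← div_eq_mul_inv, div_lt_one hy0]; exact hyx
      linarith
    rw [div_eq_div_iff hd.ne' (by linarith : (y:ℝ) - x ≠ 0)]
    field_simp
  rw [e1, e2, e3]

lemma tendsto_inv_atBot_zero' : Tendsto (fun y : ℝ => y⁻¹) atBot (𝓝 0) := by
  have h1 : Tendsto (fun y : ℝ => (-y)⁻¹) atBot (𝓝 0) :=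
    tendsto_inv_atTop_zero.comp tendsto_neg_atBot_atTop
  have h2 := h1.neg
  simp only [neg_zero] at h2
  refine h2.congr fun y => ?_
  rw [inv_neg, neg_neg]

lemma tendsto_Fa_atBot (x : ℝ) : Tendsto (Fa x) atBot
    (𝓝 (-(1/(1+x^2)) + x*Real.arsinh x/((1+x^2)*Real.sqrt (1+x^2)))) := by
  set q := Real.sqrt (1+x^2) with hq_def
  have hqp : (0:ℝ) < 1+x^2 := by positivity
  have hq : 0 < q := Real.sqrt_pos.mpr hqp
  set G : ℝ → ℝ := fun t => -(1/Real.sqrt (1+t^2)) - x/(1+x^2) * ((t-x)/Real.sqrt (1+t^2))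
    - x/((1+x^2)*q) * Real.log ((q*Real.sqrt (1+t^2)-x-t)/(1-x*t)) with hG_def
  have hG0 : G 0 = -(1/(1+x^2)) + x*Real.arsinh x/((1+x^2)*q) := by
    have h0 : Real.sqrt (1+(0:ℝ)^2) = 1 := by norm_num
    rw [hG_def]; simp only [h0]
    rw [show (q*1-x-(0:ℝ))/(1-x*0) = q - x by ring_nf, log_qx x]
    field_simp
    ring
  have hGc : ContinuousAt G 0 := by
    have hs : ContinuousAt (fun t : ℝ => Real.sqrt (1+t^2)) 0 :=
      (Real.continuous_sqrt.comp (by continuity)).continuousAt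
    have hs0 : Real.sqrt (1+(0:ℝ)^2) ≠ 0 := by norm_num
    have harg : ContinuousAt (fun t : ℝ => (q*Real.sqrt (1+t^2)-x-t)/(1-x*t)) 0 := by
      apply ContinuousAt.div
      · exact ((continuousAt_const.mul hs).sub continuousAt_const).sub continuousAt_id
      · exact continuousAt_const.sub (continuousAt_const.mul continuousAt_id)
      · norm_num
    have harg0 : (q*Real.sqrt (1+(0:ℝ)^2)-x-(0:ℝ))/(1-x*0) ≠ 0 := by
      have h1 : (q*Real.sqrt (1+(0:ℝ)^2)-x-(0:ℝ))/(1-x*0) = q - x := by norm_num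
      rw [h1]; exact (qx_pos x).ne'
    refine (ContinuousAt.sub (ContinuousAt.sub ?_ ?_) ?_)
    · exact (ContinuousAt.div continuousAt_const hs hs0).neg
    · exact continuousAt_const.mul (ContinuousAt.div
        (continuousAt_id.sub continuousAt_const) hs hs0)
    · exact continuousAt_const.mul (ContinuousAt.log harg (by simpa using harg0))
  have hcomp : Tendsto (fun y : ℝ => G y⁻¹) atBot (𝓝 (G 0)) :=
    (hGc.tendsto).comp tendsto_inv_atBot_zero'
  rw [hG0] at hcomp
  refine hcomp.congr' ?_
  filter_upwards [eventually_lt_atBot (0:ℝ), eventually_lt_atBot x] with y hy0 hyx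
  have hyne : y ≠ 0 := hy0.ne
  have hsq : Real.sqrt (1+(y⁻¹)^2) = Real.sqrt (1+y^2) / (-y) := by
    have h : 1+(y⁻¹)^2 = (1+y^2)/y^2 := by field_simp; ring
    rw [h, Real.sqrt_div (by positivity), Real.sqrt_sq_eq_abs, abs_of_neg hy0]
  have hsp : (0:ℝ) < Real.sqrt (1+y^2) := Real.sqrt_pos.mpr (by positivity)
  rw [hG_def]
  simp only [hsq]
  unfold Fa
  rw [← hq_def]
  have habs : |x - y| = x - y := abs_of_pos (by linarith)
  have e1 : -(1/(Real.sqrt (1+y^2)/(-y))) = y / Real.sqrt (1+y^2) := by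
    rw [one_div_div]
    field_simp
  have e2 : (y⁻¹-x)/(Real.sqrt (1+y^2)/(-y)) = (x*y-1)/Real.sqrt (1+y^2) := by
    rw [div_div_eq_mul_div, div_eq_div_iff (by positivity) hsp.ne']
    field_simp
    ring
  have e3 : (q*(Real.sqrt (1+y^2)/(-y))-x-y⁻¹)/(1-x*y⁻¹)
      = (1 + x*y + q * Real.sqrt (1+y^2))/|x - y| := by
    rw [habs]
    have hd : (1:ℝ) - x*y⁻¹ ≠ 0 := by
      have : 1 - x*y⁻¹ = (y - x)/y := by field_simp
      rw [this]
      exact div_ne_zero (by linarith) hyne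
    rw [div_eq_div_iff hd (by linarith : (x:ℝ) - y ≠ 0)]
    field_simp
    ring
  rw [e1, e2, e3]

lemma integrableOn_g (x ε : ℝ) (hε : 0 < ε) :
    IntegrableOn (fun y : ℝ => (-y / ((1+y^2) * Real.sqrt (1+y^2))) / (x - y))
      {y : ℝ | ε ≤ |x - y|} := by
  set S := {y : ℝ | ε ≤ |x - y|} with hS_def
  have hSc : IsClosed S := by
    have : S = (fun y : ℝ => |x - y|) ⁻¹' (Ici ε) := rfl
    rw [this]
    exact IsClosed.preimage (by continuity) isClosed_Ici
  have hSm : MeasurableSet S := hSc.measurableSet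
  have hxy : ∀ y ∈ S, x - y ≠ 0 := by
    intro y hy
    have : ε ≤ |x - y| := hy
    intro h0
    rw [h0, abs_zero] at this
    linarith
  have hcont : ContinuousOn (fun y : ℝ => (-y / ((1+y^2) * Real.sqrt (1+y^2))) / (x - y)) S := by
    apply ContinuousOn.div
    · apply ContinuousOn.div
      · exact (continuous_neg.comp continuous_id).continuousOn
      · exact (Continuous.mul (by continuity)
          (Real.continuous_sqrt.comp (by continuity))).continuousOn
      · intro y _; positivity
    · exact (continuous_const.sub continuous_id).continuousOn
    · exact hxy
  refine Integrable.mono' ((integrable_inv_one_add_sq.const_mul ε⁻¹).restrict (s := S))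
    (hcont.aestronglyMeasurable hSm) ?_
  rw [ae_restrict_iff' hSm]
  filter_upwards with y hy
  have h1 : ε ≤ |x - y| := hy
  have hsp : (0:ℝ) < Real.sqrt (1+y^2) := Real.sqrt_pos.mpr (by positivity)
  have habs : |y| ≤ Real.sqrt (1+y^2) := by
    rw [← Real.sqrt_sq_eq_abs]
    exact Real.sqrt_le_sqrt (by linarith)
  rw [Real.norm_eq_abs, abs_div, abs_div, abs_neg]
  have hy2 : |(1+y^2) * Real.sqrt (1+y^2)| = (1+y^2) * Real.sqrt (1+y^2) :=
    abs_of_pos (by positivity)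
  rw [hy2]
  have hb1 : |y| / ((1+y^2) * Real.sqrt (1+y^2)) ≤ (1+y^2)⁻¹ := by
    rw [div_le_iff₀ (by positivity)]
    calc |y| ≤ Real.sqrt (1+y^2) := habs
    _ = (1+y^2)⁻¹ * ((1+y^2) * Real.sqrt (1+y^2)) := by field_simp
  have := div_le_div₀ (show (0:ℝ) ≤ (1+y^2)⁻¹ by positivity) hb1 hε h1
  calc |y| / ((1+y^2) * Real.sqrt (1+y^2)) / |x - y|
      ≤ (1+y^2)⁻¹ / ε := this
    _ = ε⁻¹ * (1+y^2)⁻¹ := by rw [div_eq_mul_inv, mul_comm]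

lemma deriv_u (y : ℝ) : deriv (fun y : ℝ => (1 + y ^ 2) ^ (-(1:ℝ)/2)) y
    = -y / ((1+y^2) * Real.sqrt (1+y^2)) := by
  have hpos : (0:ℝ) < 1 + y^2 := by positivity
  have h1 : HasDerivAt (fun y : ℝ => 1 + y ^ 2) (2*y) y := by
    simpa using ((hasDerivAt_pow 2 y).const_add 1)
  have h2 : HasDerivAt (fun y : ℝ => (1 + y ^ 2) ^ (-(1:ℝ)/2))
      ((-(1:ℝ)/2) * (1+y^2) ^ ((-(1:ℝ)/2) - 1) * (2*y)) y := by
    have := (Real.hasDerivAt_rpow_const (x := 1 + y ^ 2) (p := -(1:ℝ)/2) (Or.inl hpos.ne')).comp y h1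
    exact this
  rw [h2.deriv]
  have h3 : ((-(1:ℝ)/2) - 1) = -(3/2 : ℝ) := by norm_num
  rw [h3, Real.rpow_neg hpos.le]
  have h4 : (1+y^2) ^ ((3:ℝ)/2) = (1+y^2) * Real.sqrt (1+y^2) := by
    rw [Real.sqrt_eq_rpow, ← Real.rpow_one_add' hpos.le (by norm_num)]
    norm_num
  rw [h4]; field_simp

lemma integral_eval (x ε : ℝ) (hε : 0 < ε) :
    ∫ y in {y : ℝ | ε ≤ |x - y|}, (-y / ((1+y^2) * Real.sqrt (1+y^2))) / (x - y)
    = (Fa x (x-ε) - (-(1/(1+x^2)) + x*Real.arsinh x/((1+x^2)*Real.sqrt (1+x^2))))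
      + ((1/(1+x^2) - x*Real.arsinh x/((1+x^2)*Real.sqrt (1+x^2))) - Fa x (x+ε)) := by
  have hset : {y : ℝ | ε ≤ |x - y|} = Iic (x-ε) ∪ Ici (x+ε) := by
    ext y
    simp only [mem_setOf_eq, mem_union, mem_Iic, mem_Ici, le_abs]
    constructor
    · rintro (h | h)
      · left; linarith
      · right; linarith
    · rintro (h | h)
      · left; linarith
      · right; linarith
  have hdisj : Disjoint (Iic (x-ε)) (Ici (x+ε)) :=
    Iic_disjoint_Ici.mpr (show ¬ x+ε ≤ x-ε by intro h; linarith)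
  have hint := integrableOn_g x ε hε
  rw [hset] at hint
  have hint1 : IntegrableOn (fun y : ℝ => (-y / ((1+y^2) * Real.sqrt (1+y^2))) / (x - y))
      (Iic (x-ε)) := hint.mono_set subset_union_left
  have hint2 : IntegrableOn (fun y : ℝ => (-y / ((1+y^2) * Real.sqrt (1+y^2))) / (x - y))
      (Ici (x+ε)) := hint.mono_set subset_union_right
  rw [hset, setIntegral_union hdisj measurableSet_Ici hint1 hint2]
  have h1 : ∫ y in Iic (x-ε), (-y / ((1+y^2) * Real.sqrt (1+y^2))) / (x - y)
      = Fa x (x-ε) - (-(1/(1+x^2)) + x*Real.arsinh x/((1+x^2)*Real.sqrt (1+x^2))) := by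
    apply integral_Iic_of_hasDerivAt_of_tendsto' (f := Fa x)
    · intro y hy
      exact hasDerivAt_Fa x y (by simp only [mem_Iic] at hy; intro h; rw [h] at hy; linarith)
    · exact hint1
    · exact tendsto_Fa_atBot x
  have h2 : ∫ y in Ici (x+ε), (-y / ((1+y^2) * Real.sqrt (1+y^2))) / (x - y)
      = (1/(1+x^2) - x*Real.arsinh x/((1+x^2)*Real.sqrt (1+x^2))) - Fa x (x+ε) := by
    rw [integral_Ici_eq_integral_Ioi]
    have := integral_Ioi_of_hasDerivAt_of_tendsto' (f := Fa x) (a := x+ε)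
      (fun y hy => hasDerivAt_Fa x y
        (by simp only [mem_Ici] at hy; intro h; rw [h] at hy; linarith))
      (hint2.mono_set Ioi_subset_Ici_self) (tendsto_Fa_atTop x)
    rw [this]
  rw [h1, h2]

/-- For every `x ∈ ℝ`, the half Laplacian of `u(y) = (1+y²)^{−1/2}`, i.e. the principal value
`(1/π)·PV∫ u'(y)/(x−y) dy`, exists and equals
`(2√(x²+1) − 2x·arsinh x)/(π(x²+1)^{3/2})`. -/
theorem halfLaplacian_inv_sqrt_one_add_sq (x : ℝ) :
    Tendsto (fun ε : ℝ => (1 / Real.pi) *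
        ∫ y in {y : ℝ | ε ≤ |x - y|},
          deriv (fun y : ℝ => (1 + y ^ 2) ^ (-(1 : ℝ) / 2)) y / (x - y))
      (nhdsWithin 0 (Set.Ioi 0))
      (nhds ((2 * Real.sqrt (x ^ 2 + 1) - 2 * x * Real.arsinh x)
        / (Real.pi * (x ^ 2 + 1) ^ ((3 : ℝ) / 2)))) := by
  have hqp : (0:ℝ) < 1+x^2 := by positivity
  set q := Real.sqrt (1+x^2) with hq_def
  have hq : 0 < q := Real.sqrt_pos.mpr hqp
  set Lp : ℝ := 1/(1+x^2) - x*Real.arsinh x/((1+x^2)*q) with hLp_def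
  set Lm : ℝ := -(1/(1+x^2)) + x*Real.arsinh x/((1+x^2)*q) with hLm_def
  -- the auxiliary difference function, continuous at 0
  set Φ : ℝ → ℝ := fun y => y/Real.sqrt (1+y^2) - x/(1+x^2) * ((x*y-1)/Real.sqrt (1+y^2))
    with hPhi_def
  set Nf : ℝ → ℝ := fun y => 1 + x*y + q*Real.sqrt (1+y^2) with hNf_def
  set D : ℝ → ℝ := fun ε => (Φ (x-ε) - Φ (x+ε))
    - x/((1+x^2)*q) * (Real.log (Nf (x-ε)) - Real.log (Nf (x+ε))) with hD_def
  have hPhic : Continuous Φ := by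
    rw [hPhi_def]
    have hsc : Continuous (fun y : ℝ => Real.sqrt (1+y^2)) :=
      Real.continuous_sqrt.comp (by continuity)
    have hsn : ∀ y : ℝ, Real.sqrt (1+y^2) ≠ 0 := by
      intro y
      exact (Real.sqrt_pos.mpr (by positivity)).ne'
    exact ((continuous_id.div hsc hsn).sub
      (continuous_const.mul (((continuous_const.mul continuous_id).sub
        continuous_const).div hsc hsn)))
  have hD0 : Tendsto D (𝓝 0) (𝓝 0) := by
    have hNc : Continuous Nf := by
      rw [hNf_def]
      exact (continuous_const.add (continuous_const.mul continuous_id)).add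
        (continuous_const.mul (Real.continuous_sqrt.comp (by continuity)))
    have hlogc : ∀ z : ℝ, ContinuousAt (fun ε : ℝ => Real.log (Nf (x + z * ε))) 0 := by
      intro z
      apply ContinuousAt.log
      · exact (hNc.comp (by continuity)).continuousAt
      · simpa using (N_pos x (x + z * 0)).ne'
    have hc : ContinuousAt D 0 := by
      rw [hD_def]
      apply ContinuousAt.sub
      · exact ((hPhic.comp (continuous_const.sub continuous_id)).continuousAt).sub
          ((hPhic.comp (continuous_const.add continuous_id)).continuousAt)
      · refine continuousAt_const.mul (ContinuousAt.sub ?_ ?_)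
        · have := hlogc (-1)
          simpa [sub_eq_add_neg, neg_one_mul] using this
        · have := hlogc 1
          simpa using this
    have hval : D 0 = 0 := by
      rw [hD_def]
      simp
    have := hc.tendsto
    rw [hval] at this
    exact this
  -- difference of Fa values equals D for positive ε
  have hFaD : ∀ ε : ℝ, 0 < ε → Fa x (x-ε) - Fa x (x+ε) = D ε := by
    intro ε hε
    have habs1 : |x - (x-ε)| = ε := by rw [show x - (x-ε) = ε by ring]; exact abs_of_pos hε
    have habs2 : |x - (x+ε)| = ε := by
      rw [show x - (x+ε) = -ε by ring]; rw [abs_neg]; exact abs_of_pos hε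
    have hN1 := N_pos x (x-ε)
    have hN2 := N_pos x (x+ε)
    unfold Fa
    rw [← hq_def, habs1, habs2,
      Real.log_div (N_pos x (x-ε)).ne' hε.ne',
      Real.log_div (N_pos x (x+ε)).ne' hε.ne']
    rw [hD_def, hPhi_def, hNf_def]
    ring
  -- the tendsto of the explicit formula
  have hK : Tendsto (fun ε : ℝ => (1 / Real.pi) * ((Fa x (x-ε) - Lm) + (Lp - Fa x (x+ε))))
      (𝓝[>] (0:ℝ)) (𝓝 ((1 / Real.pi) * (Lp - Lm))) := by
    have base : Tendsto (fun ε : ℝ => (1 / Real.pi) * ((Lp - Lm) + D ε))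
        (𝓝[>] (0:ℝ)) (𝓝 ((1 / Real.pi) * (Lp - Lm))) := by
      have := (tendsto_const_nhds (x := (Lp - Lm)) (f := 𝓝[>] (0:ℝ))).add
        (hD0.mono_left nhdsWithin_le_nhds)
      rw [add_zero] at this
      exact this.const_mul _
    refine base.congr' ?_
    filter_upwards [self_mem_nhdsWithin] with ε hε
    rw [← hFaD ε hε]
    ring
  -- identify the limit value
  have hlim : (1 / Real.pi) * (Lp - Lm)
      = (2 * Real.sqrt (x ^ 2 + 1) - 2 * x * Real.arsinh x)
        / (Real.pi * (x ^ 2 + 1) ^ ((3 : ℝ) / 2)) := by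
    have hr : (x^2+1:ℝ) ^ ((3:ℝ)/2) = (x^2+1) * Real.sqrt (x^2+1) := by
      rw [Real.sqrt_eq_rpow, ← Real.rpow_one_add' (by positivity) (by norm_num)]
      norm_num
    have hsw : Real.sqrt (x^2+1) = q := by rw [hq_def, add_comm]
    rw [hr, hsw, hLp_def, hLm_def, show (x^2+1:ℝ) = 1+x^2 by ring]
    have hpi := Real.pi_ne_zero
    field_simp
    ring
  rw [← hlim]
  refine hK.congr' ?_
  filter_upwards [self_mem_nhdsWithin] with ε hε
  have hfun : (fun y : ℝ => deriv (fun y : ℝ => (1 + y ^ 2) ^ (-(1 : ℝ) / 2)) y / (x - y))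
      = fun y : ℝ => (-y / ((1+y^2) * Real.sqrt (1+y^2))) / (x - y) :=
    funext fun y => by rw [deriv_u]
  rw [hfun, integral_eval x ε hε, ← hq_def]
end

section
/- For every x ∈ ℝ, the principal value (1/π)·PV∫ [(2/√π)·e^{−y²}]/(x−y) dy exists and equals (4/π)·e^{−x²}·∫_{0}^{x} e^{t²} dt; that is, the half Laplacian of the error function erf(x) = (2/√π)∫₀ˣ e^{−t²}dt equals (4/π)·D(x), where D(x) = e^{−x²}∫₀ˣ e^{t²}dt is Dawson's integral. -/
open Filter MeasureTheory Real

lemma gauss_shift_integrable (b : ℝ) : Integrable (fun u : ℝ => exp (-(u - b) ^ 2)) := by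
  have h := (integrable_exp_neg_mul_sq (b := 1) one_pos).comp_sub_right b
  simpa using h

lemma gauss_shift_integral (b : ℝ) : ∫ u : ℝ, exp (-(u - b) ^ 2) = Real.sqrt π := by
  have h := integral_gaussian (1 : ℝ)
  rw [div_one] at h
  rw [← h]
  rw [← integral_sub_right_eq_self (fun u : ℝ => exp (-1 * u ^ 2)) b]
  simp

lemma gauss_lin_integrable (b : ℝ) : Integrable (fun u : ℝ => exp (-u ^ 2 + b * u)) := by
  have : (fun u : ℝ => exp (-u ^ 2 + b * u))
      = fun u : ℝ => exp (b ^ 2 / 4) * exp (-(u - b / 2) ^ 2) := by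
    funext u
    rw [← Real.exp_add]
    ring_nf
  rw [this]
  exact (gauss_shift_integrable (b / 2)).const_mul _

lemma gauss_lin_integral (b : ℝ) :
    ∫ u : ℝ, exp (-u ^ 2 + b * u) = Real.sqrt π * exp (b ^ 2 / 4) := by
  have : (fun u : ℝ => exp (-u ^ 2 + b * u))
      = fun u : ℝ => exp (b ^ 2 / 4) * exp (-(u - b / 2) ^ 2) := by
    funext u
    rw [← Real.exp_add]
    ring_nf
  rw [this, integral_const_mul, gauss_shift_integral]
  ring

lemma sinh_le_mul_exp {t : ℝ} (ht : 0 ≤ t) : Real.sinh t ≤ t * exp (2 * t) := by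
  rw [Real.sinh_eq]
  have h1 : exp (-t) ≤ 1 := Real.exp_le_one_iff.2 (by linarith)
  have h2 : 1 - exp (-(2 * t)) ≤ 2 * t := by
    have := Real.add_one_le_exp (-(2 * t))
    linarith
  have h3 : exp t - exp (-t) ≤ exp (2 * t) - 1 := by
    have : exp t - exp (-t) = exp (-t) * (exp (2 * t) - 1) := by
      rw [mul_sub, ← Real.exp_add]; ring_nf
    rw [this]
    have h4 : (0:ℝ) ≤ exp (2 * t) - 1 := by
      have := Real.add_one_le_exp (2 * t); linarith
    nlinarith
  have h5 : exp (2 * t) - 1 ≤ 2 * t * exp (2 * t) := by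
    have : exp (-(2*t)) * exp (2*t) = 1 := by rw [← Real.exp_add]; simp
    nlinarith [Real.exp_pos (2 * t)]
  linarith

lemma abs_sinh_le (a u : ℝ) (hu : 0 ≤ u) :
    |Real.sinh (2 * a * u)| ≤ 2 * |a| * u * exp (4 * |a| * u) := by
  rw [Real.abs_sinh]
  have habs : |2 * a * u| = 2 * |a| * u := by
    rw [abs_mul, abs_mul]; simp [abs_of_nonneg hu, abs_of_nonneg, mul_assoc]
  rw [habs]
  have := sinh_le_mul_exp (t := 2 * |a| * u) (by positivity)
  calc Real.sinh (2 * |a| * u) ≤ 2 * |a| * u * exp (2 * (2 * |a| * u)) := this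
    _ = 2 * |a| * u * exp (4 * |a| * u) := by ring_nf

lemma cosh_le_exp_abs (t : ℝ) : Real.cosh t ≤ exp |t| := by
  rw [← Real.cosh_abs, Real.cosh_eq]
  have : exp (-|t|) ≤ exp |t| := exp_le_exp.2 ((neg_abs_le t).trans (le_abs_self t))
  linarith

lemma key_identity (x u : ℝ) :
    (exp (-(x - u) ^ 2) - exp (-(x + u) ^ 2)) / u
      = 2 * exp (-x ^ 2) * (exp (-u ^ 2) * Real.sinh (2 * x * u) / u) := by
  rw [Real.sinh_eq]
  rw [show -(x - u) ^ 2 = -x ^ 2 + (-u ^ 2 + 2 * x * u) by ring,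
    show -(x + u) ^ 2 = -x ^ 2 + (-u ^ 2 + -(2 * x * u)) by ring,
    Real.exp_add, Real.exp_add, Real.exp_add, Real.exp_add]
  ring

lemma sinh_kernel_integrableOn (a : ℝ) :
    IntegrableOn (fun u : ℝ => exp (-u ^ 2) * Real.sinh (2 * a * u) / u) (Set.Ioi 0) := by
  apply Integrable.mono' (g := fun u : ℝ => 2 * |a| * exp (-u ^ 2 + 4 * |a| * u))
  · exact ((gauss_lin_integrable (4 * |a|)).const_mul _).restrict
  · apply Measurable.aestronglyMeasurable
    fun_prop
  · filter_upwards [ae_restrict_mem measurableSet_Ioi] with u hu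
    have hu0 : (0:ℝ) < u := hu
    rw [Real.norm_eq_abs, abs_div, abs_mul, abs_of_pos hu0, abs_of_pos (exp_pos _)]
    rw [div_le_iff₀ hu0]
    have hs := abs_sinh_le a u hu0.le
    calc exp (-u ^ 2) * |Real.sinh (2 * a * u)|
        ≤ exp (-u ^ 2) * (2 * |a| * u * exp (4 * |a| * u)) := by
          exact mul_le_mul_of_nonneg_left hs (exp_pos _).le
      _ = 2 * |a| * exp (-u ^ 2 + 4 * |a| * u) * u := by
          rw [Real.exp_add]; ring

lemma G_integrableOn (x : ℝ) :
    IntegrableOn (fun u : ℝ => (exp (-(x - u) ^ 2) - exp (-(x + u) ^ 2)) / u)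
      (Set.Ioi 0) := by
  have h : (fun u : ℝ => (exp (-(x - u) ^ 2) - exp (-(x + u) ^ 2)) / u)
      = fun u => (2 * exp (-x ^ 2)) * (exp (-u ^ 2) * Real.sinh (2 * x * u) / u) :=
    funext fun u => key_identity x u
  rw [h]
  exact (sinh_kernel_integrableOn x).const_mul _

lemma tail_integrableOn (b ε : ℝ) (hε : 0 < ε) :
    IntegrableOn (fun u : ℝ => exp (-(u - b) ^ 2) / u) (Set.Ici ε) := by
  apply Integrable.mono' (g := fun u : ℝ => ε⁻¹ * exp (-(u - b) ^ 2))
  · exact ((gauss_shift_integrable b).const_mul _).restrict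
  · apply Measurable.aestronglyMeasurable; fun_prop
  · filter_upwards [ae_restrict_mem measurableSet_Ici] with u hu
    have hu0 : (0:ℝ) < u := lt_of_lt_of_le hε hu
    rw [Real.norm_eq_abs, abs_div, abs_of_pos hu0, abs_of_pos (exp_pos _), div_le_iff₀ hu0]
    rw [mul_comm (ε⁻¹) _, mul_assoc]
    nth_rewrite 1 [← mul_one (exp _)]
    apply mul_le_mul_of_nonneg_left _ (exp_pos _).le
    rw [← div_eq_inv_mul, le_div_iff₀ hε]
    linarith [Set.mem_Ici.1 hu]

lemma stepA (x ε : ℝ) (hε : 0 < ε) :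
    ∫ y in {y : ℝ | ε ≤ |x - y|}, exp (-y ^ 2) / (x - y)
      = ∫ u in Set.Ici ε, (exp (-(x - u) ^ 2) - exp (-(x + u) ^ 2)) / u := by
  -- substitution y = x - u
  have h1 : ∫ y in {y : ℝ | ε ≤ |x - y|}, exp (-y ^ 2) / (x - y)
      = ∫ u in {u : ℝ | ε ≤ |u|}, exp (-(x - u) ^ 2) / u := by
    have := (Measure.measurePreserving_sub_left volume x).setIntegral_preimage_emb
      (MeasurableEquiv.subLeft x).measurableEmbedding
      (fun u : ℝ => exp (-(x - u) ^ 2) / u) {u : ℝ | ε ≤ |u|}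
    have hpre : (fun t : ℝ => x - t) ⁻¹' {u : ℝ | ε ≤ |u|} = {y : ℝ | ε ≤ |x - y|} := by
      ext y; simp [Set.mem_preimage]
    rw [hpre] at this
    rw [← this]
    apply setIntegral_congr_fun
      (measurableSet_le measurable_const ((measurable_const.sub measurable_id).abs))
    intro y _
    beta_reduce
    rw [show x - (x - y) = y from by ring]
  rw [h1]
  -- split the set
  have hset : {u : ℝ | ε ≤ |u|} = Set.Iic (-ε) ∪ Set.Ici ε := by
    ext u; simp [le_abs', Set.mem_union, or_comm]
  -- integrability on the two pieces
  have hInt1 : IntegrableOn (fun u : ℝ => exp (-(x - u) ^ 2) / u) (Set.Ici ε) := by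
    apply (tail_integrableOn x ε hε).congr_fun _ measurableSet_Ici
    intro u _
    beta_reduce
    rw [show (u - x) ^ 2 = (x - u) ^ 2 from by ring]
  have hInt2' : IntegrableOn (fun u : ℝ => exp (-(x + u) ^ 2) / u) (Set.Ici ε) := by
    apply (tail_integrableOn (-x) ε hε).congr_fun _ measurableSet_Ici
    intro u _
    beta_reduce
    rw [show (u - -x) ^ 2 = (x + u) ^ 2 from by ring]
  -- reflection on the left piece
  have h2 : ∫ u in Set.Iic (-ε), exp (-(x - u) ^ 2) / u
      = -∫ u in Set.Ici ε, exp (-(x + u) ^ 2) / u := by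
    have := (Measure.measurePreserving_neg volume).setIntegral_preimage_emb
      (MeasurableEquiv.neg ℝ).measurableEmbedding
      (fun u : ℝ => exp (-(x - u) ^ 2) / u) (Set.Iic (-ε))
    have hpre : (fun u : ℝ => -u) ⁻¹' Set.Iic (-ε) = Set.Ici ε := by
      ext u; simp [Set.mem_preimage, neg_le]
    rw [hpre] at this
    rw [← this, ← integral_neg]
    apply setIntegral_congr_fun measurableSet_Ici
    intro u _
    beta_reduce
    rw [show x - -u = x + u from by ring, div_neg]
  have hInt2 : IntegrableOn (fun u : ℝ => exp (-(x - u) ^ 2) / u) (Set.Iic (-ε)) := by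
    rw [← (Measure.measurePreserving_neg volume).integrableOn_comp_preimage
      (MeasurableEquiv.neg ℝ).measurableEmbedding]
    have hpre : (fun u : ℝ => -u) ⁻¹' Set.Iic (-ε) = Set.Ici ε := by
      ext u; simp [Set.mem_preimage, neg_le]
    rw [hpre]
    apply IntegrableOn.congr_fun hInt2'.neg _ measurableSet_Ici
    intro u _
    simp only [Pi.neg_apply, Function.comp_apply]
    rw [show x - -u = x + u from by ring, div_neg]
  rw [hset, setIntegral_union (Set.Iic_disjoint_Ici.2 (by simp; linarith))
    measurableSet_Ici hInt2 hInt1, h2]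
  have h3 : (fun u : ℝ => (exp (-(x - u) ^ 2) - exp (-(x + u) ^ 2)) / u)
      = fun u => exp (-(x - u) ^ 2) / u - exp (-(x + u) ^ 2) / u :=
    funext fun u => sub_div _ _ _
  rw [h3, integral_sub hInt1 hInt2']
  ring

lemma G_bound (x u : ℝ) (hu : 0 < u) :
    |(exp (-(x - u) ^ 2) - exp (-(x + u) ^ 2)) / u|
      ≤ 4 * |x| * exp (-x ^ 2) * exp (-u ^ 2 + 4 * |x| * u) := by
  rw [key_identity, abs_mul, abs_div, abs_mul, abs_mul, abs_two,
    abs_of_pos hu, abs_of_pos (exp_pos (-x ^ 2)), abs_of_pos (exp_pos (-u ^ 2))]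
  rw [← mul_div_assoc, div_le_iff₀ hu]
  calc 2 * exp (-x ^ 2) * (exp (-u ^ 2) * |Real.sinh (2 * x * u)|)
      ≤ 2 * exp (-x ^ 2) * (exp (-u ^ 2) * (2 * |x| * u * exp (4 * |x| * u))) := by
        gcongr
        exact abs_sinh_le x u hu.le
    _ = 4 * |x| * exp (-x ^ 2) * exp (-u ^ 2 + 4 * |x| * u) * u := by
        rw [Real.exp_add]; ring

lemma stepB (x : ℝ) :
    Tendsto (fun ε : ℝ =>
        ∫ u in Set.Ici ε, (exp (-(x - u) ^ 2) - exp (-(x + u) ^ 2)) / u)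
      (nhdsWithin 0 (Set.Ioi 0))
      (nhds (∫ u in Set.Ioi 0, (exp (-(x - u) ^ 2) - exp (-(x + u) ^ 2)) / u)) := by
  set G := fun u : ℝ => (exp (-(x - u) ^ 2) - exp (-(x + u) ^ 2)) / u with hGdef
  have hG : IntegrableOn G (Set.Ioi 0) := G_integrableOn x
  set M := 4 * |x| * exp (-x ^ 2) * exp (4 * |x|) with hM
  have hM0 : 0 ≤ M := by positivity
  -- tail equality
  have hsplit : ∀ ε : ℝ, 0 < ε →
      ∫ u in Set.Ici ε, G u = (∫ u in Set.Ioi 0, G u) - ∫ u in Set.Ioc 0 ε, G u := by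
    intro ε hε
    have h1 : ∫ u in Set.Ici ε, G u = ∫ u in Set.Ioi ε, G u :=
      (setIntegral_congr_set (Ioi_ae_eq_Ici (a := ε))).symm
    have h2 : ∫ u in Set.Ioi 0, G u
        = (∫ u in Set.Ioc 0 ε, G u) + ∫ u in Set.Ioi ε, G u := by
      rw [← setIntegral_union (Set.Ioc_disjoint_Ioi le_rfl) measurableSet_Ioi
        (hG.mono_set Set.Ioc_subset_Ioi_self) (hG.mono_set (Set.Ioi_subset_Ioi hε.le)),
        Set.Ioc_union_Ioi_eq_Ioi hε.le]
    rw [h1, h2]; ring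
  -- bound on the small piece
  have hbound : ∀ ε : ℝ, ε ∈ Set.Ioc (0:ℝ) 1 → ‖∫ u in Set.Ioc 0 ε, G u‖ ≤ M * ε := by
    intro ε hε
    have := norm_setIntegral_le_of_norm_le_const (μ := volume) (s := Set.Ioc (0:ℝ) ε)
      (f := G) (C := M) (by simp [Real.volume_Ioc]) ?_
    · have hvol : volume.real (Set.Ioc (0:ℝ) ε) = ε := by
        simp [Measure.real, Real.volume_Ioc, hε.1.le]
      rw [hvol] at this
      linarith [this]
    · intro u hu
      rw [Real.norm_eq_abs]
      refine (G_bound x u hu.1).trans ?_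
      rw [hM]
      gcongr
      nlinarith [hu.1.le, hu.2.trans hε.2, abs_nonneg x, sq_nonneg u]
  -- conclude
  have hsmall : Tendsto (fun ε : ℝ => ∫ u in Set.Ioc 0 ε, G u)
      (nhdsWithin 0 (Set.Ioi 0)) (nhds 0) := by
    apply squeeze_zero_norm' (a := fun ε : ℝ => M * ε)
    · filter_upwards [Ioc_mem_nhdsGT one_pos] with ε hε
      exact hbound ε hε
    · have : Tendsto (fun ε : ℝ => M * ε) (nhds 0) (nhds (M * 0)) :=
        (tendsto_id.const_mul M)
      rw [mul_zero] at this
      exact this.mono_left nhdsWithin_le_nhds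
  have : Tendsto (fun ε : ℝ => (∫ u in Set.Ioi 0, G u) - ∫ u in Set.Ioc 0 ε, G u)
      (nhdsWithin 0 (Set.Ioi 0)) (nhds ((∫ u in Set.Ioi 0, G u) - 0)) :=
    tendsto_const_nhds.sub hsmall
  rw [sub_zero] at this
  apply this.congr'
  filter_upwards [self_mem_nhdsWithin] with ε hε
  exact (hsplit ε hε).symm

noncomputable def Psi (a : ℝ) : ℝ := ∫ u in Set.Ioi (0:ℝ), exp (-u ^ 2) * Real.sinh (2 * a * u) / u

lemma Psi_zero : Psi 0 = 0 := by
  unfold Psi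
  simp

lemma cosh_kernel_integrable (a : ℝ) :
    Integrable (fun u : ℝ => exp (-u ^ 2) * Real.cosh (2 * a * u)) := by
  have h : (fun u : ℝ => exp (-u ^ 2) * Real.cosh (2 * a * u))
      = fun u => (exp (-u ^ 2 + 2 * a * u) + exp (-u ^ 2 + (-(2 * a)) * u)) / 2 := by
    funext u
    rw [Real.cosh_eq, Real.exp_add, Real.exp_add]
    ring
  rw [h]
  exact ((gauss_lin_integrable (2 * a)).add (gauss_lin_integrable (-(2 * a)))).div_const 2

lemma cosh_kernel_integral (a : ℝ) :
    ∫ u : ℝ, exp (-u ^ 2) * Real.cosh (2 * a * u) = Real.sqrt π * exp (a ^ 2) := by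
  have h : (fun u : ℝ => exp (-u ^ 2) * Real.cosh (2 * a * u))
      = fun u => (exp (-u ^ 2 + 2 * a * u) + exp (-u ^ 2 + (-(2 * a)) * u)) / 2 := by
    funext u
    rw [Real.cosh_eq, Real.exp_add, Real.exp_add]
    ring
  rw [h]
  rw [integral_div]
  rw [integral_add (gauss_lin_integrable (2 * a)) (gauss_lin_integrable (-(2 * a)))]
  rw [gauss_lin_integral, gauss_lin_integral]
  rw [show (2 * a) ^ 2 / 4 = a ^ 2 by ring, show (-(2 * a)) ^ 2 / 4 = a ^ 2 by ring]
  ring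

lemma cosh_kernel_halfline (a : ℝ) :
    ∫ u in Set.Ioi (0:ℝ), 2 * (exp (-u ^ 2) * Real.cosh (2 * a * u))
      = Real.sqrt π * exp (a ^ 2) := by
  set f := fun u : ℝ => exp (-u ^ 2) * Real.cosh (2 * a * u) with hf
  have hint := cosh_kernel_integrable a
  have hsplit : ∫ u : ℝ, f u = (∫ u in Set.Iic (0:ℝ), f u) + ∫ u in Set.Ioi (0:ℝ), f u :=
    (intervalIntegral.integral_Iic_add_Ioi hint.integrableOn hint.integrableOn).symm
  have hrefl : ∫ u in Set.Iic (0:ℝ), f u = ∫ u in Set.Ioi (0:ℝ), f u := by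
    rw [show Set.Iic (0:ℝ) = Set.Iic (-(0:ℝ)) by norm_num, ← integral_comp_neg_Ioi]
    apply setIntegral_congr_fun measurableSet_Ioi
    intro u _
    simp only [hf]
    rw [show 2 * a * -u = -(2 * a * u) by ring, Real.cosh_neg, neg_pow]
    ring_nf
  have h2 : (2:ℝ) * ∫ u in Set.Ioi (0:ℝ), f u = ∫ u : ℝ, f u := by
    rw [hsplit, hrefl]; ring
  rw [integral_const_mul, h2, cosh_kernel_integral a]

lemma Psi_hasDerivAt (a₀ : ℝ) : HasDerivAt Psi (Real.sqrt π * exp (a₀ ^ 2)) a₀ := by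
  have key := hasDerivAt_integral_of_dominated_loc_of_deriv_le
    (μ := volume.restrict (Set.Ioi (0:ℝ)))
    (F := fun a u => exp (-u ^ 2) * Real.sinh (2 * a * u) / u)
    (F' := fun a u => 2 * (exp (-u ^ 2) * Real.cosh (2 * a * u)))
    (x₀ := a₀)
    (bound := fun u => 2 * exp (-u ^ 2 + (2 * (|a₀| + 1)) * u))
    (s := Metric.ball a₀ 1) (Metric.ball_mem_nhds a₀ one_pos) ?_ ?_ ?_ ?_ ?_ ?_
  · have := key.2
    rwa [cosh_kernel_halfline a₀] at this
  · filter_upwards with a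
    apply Measurable.aestronglyMeasurable
    fun_prop
  · exact sinh_kernel_integrableOn a₀
  · apply Measurable.aestronglyMeasurable
    fun_prop
  · filter_upwards [ae_restrict_mem measurableSet_Ioi] with u hu a ha
    have hu0 : (0:ℝ) < u := hu
    rw [Real.norm_eq_abs, abs_mul, abs_two, abs_mul,
      abs_of_pos (exp_pos _), abs_of_pos (Real.cosh_pos _)]
    have h1 : Real.cosh (2 * a * u) ≤ exp ((2 * (|a₀| + 1)) * u) := by
      refine (cosh_le_exp_abs _).trans ?_
      apply Real.exp_le_exp.2
      have : |a| ≤ |a₀| + 1 := by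
        have := mem_ball_iff_norm.1 ha
        rw [Real.norm_eq_abs] at this
        calc |a| = |a₀ + (a - a₀)| := by ring_nf
          _ ≤ |a₀| + |a - a₀| := abs_add_le _ _
          _ ≤ |a₀| + 1 := by linarith
      calc |2 * a * u| = 2 * |a| * u := by
            rw [abs_mul, abs_mul, abs_two, abs_of_pos hu0]
        _ ≤ 2 * (|a₀| + 1) * u := by nlinarith [abs_nonneg a]
    calc 2 * (exp (-u ^ 2) * Real.cosh (2 * a * u))
        ≤ 2 * (exp (-u ^ 2) * exp ((2 * (|a₀| + 1)) * u)) := by gcongr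
      _ = 2 * exp (-u ^ 2 + (2 * (|a₀| + 1)) * u) := by rw [← Real.exp_add]
  · exact ((gauss_lin_integrable _).const_mul 2).restrict
  · filter_upwards [ae_restrict_mem measurableSet_Ioi] with u hu a _
    have hu0 : (0:ℝ) < u := hu
    have h1 : HasDerivAt (fun a : ℝ => 2 * a * u) (2 * u) a := by
      simpa using ((hasDerivAt_id a).const_mul 2).mul_const u
    have h2 : HasDerivAt (fun a : ℝ => Real.sinh (2 * a * u))
        (Real.cosh (2 * a * u) * (2 * u)) a := h1.sinh
    have h3 : HasDerivAt (fun a : ℝ => exp (-u ^ 2) * Real.sinh (2 * a * u) / u)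
        (exp (-u ^ 2) * (Real.cosh (2 * a * u) * (2 * u)) / u) a :=
      (h2.const_mul (exp (-u ^ 2))).div_const u
    have e : 2 * (exp (-u ^ 2) * Real.cosh (2 * a * u))
        = exp (-u ^ 2) * (Real.cosh (2 * a * u) * (2 * u)) / u := by
      rw [eq_div_iff hu0.ne']
      ring
    exact h3.congr_deriv e.symm

lemma Psi_eq (a : ℝ) : Psi a = Real.sqrt π * ∫ t in (0:ℝ)..a, exp (t ^ 2) := by
  have h := intervalIntegral.integral_eq_sub_of_hasDerivAt
    (f := Psi) (f' := fun t => Real.sqrt π * exp (t ^ 2)) (a := 0) (b := a)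
    (fun t _ => Psi_hasDerivAt t)
    ((continuous_const.mul (Real.continuous_exp.comp (continuous_pow 2))).intervalIntegrable 0 a)
  rw [Psi_zero, sub_zero] at h
  rw [← h, intervalIntegral.integral_const_mul]

/-- For every `x ∈ ℝ`, the half Laplacian of the error function, i.e. the principal value
`(1/π)·PV∫ (2/√π)e^{−y²}/(x−y) dy`, exists and equals `(4/π)·e^{−x²}·∫₀ˣ e^{t²} dt`, i.e.
`(4/π)` times Dawson's integral. -/
theorem halfLaplacian_erf (x : ℝ) :
    Tendsto (fun ε : ℝ => (1 / Real.pi) *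
        ∫ y in {y : ℝ | ε ≤ |x - y|},
          (2 / Real.sqrt Real.pi) * Real.exp (-y ^ 2) / (x - y))
      (nhdsWithin 0 (Set.Ioi 0))
      (nhds ((4 / Real.pi) * Real.exp (-x ^ 2) * ∫ t in (0 : ℝ)..x, Real.exp (t ^ 2))) := by
  set G := fun u : ℝ => (exp (-(x - u) ^ 2) - exp (-(x + u) ^ 2)) / u with hGdef
  have hI : ∫ u in Set.Ioi (0:ℝ), G u = 2 * exp (-x ^ 2) * Psi x := by
    have h : G = fun u => (2 * exp (-x ^ 2)) * (exp (-u ^ 2) * Real.sinh (2 * x * u) / u) :=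
      funext fun u => key_identity x u
    rw [h, integral_const_mul]
    rfl
  have hsqrt : Real.sqrt π ≠ 0 := ne_of_gt (Real.sqrt_pos.2 Real.pi_pos)
  have hval : (1 / Real.pi) * ((2 / Real.sqrt Real.pi) * ∫ u in Set.Ioi (0:ℝ), G u)
      = (4 / Real.pi) * Real.exp (-x ^ 2) * ∫ t in (0 : ℝ)..x, Real.exp (t ^ 2) := by
    rw [hI, Psi_eq]
    field_simp
    ring
  have main := ((stepB x).const_mul (2 / Real.sqrt Real.pi)).const_mul (1 / Real.pi)
  rw [hval] at main
  apply main.congr'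
  filter_upwards [self_mem_nhdsWithin] with ε hε
  have hε0 : (0:ℝ) < ε := hε
  congr 1
  have h1 : ∀ y : ℝ, (2 / Real.sqrt Real.pi) * Real.exp (-y ^ 2) / (x - y)
      = (2 / Real.sqrt Real.pi) * (Real.exp (-y ^ 2) / (x - y)) := fun y => mul_div_assoc _ _ _
  rw [show (∫ y in {y : ℝ | ε ≤ |x - y|}, (2 / Real.sqrt Real.pi) * Real.exp (-y ^ 2) / (x - y))
      = ∫ y in {y : ℝ | ε ≤ |x - y|}, (2 / Real.sqrt Real.pi) * (Real.exp (-y ^ 2) / (x - y))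
    from by simp_rw [h1]]
  rw [integral_const_mul, stepA x ε hε0]
end
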